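/- The distribution P_𝚫 of the general independent-simplex model 𝚫(n; 𝐩₁,…,𝐩ₙ), with all p_σ ∈ (0,1), is the unique maximizer of entropy among probability distributions P on the set 𝒞_{≤n} of simplicial complexes on at most n labeled vertices, subject to the constraints E_P[a_σ] = E_{P_𝚫}[a_σ] for every nonempty subset σ of {1,…,n} and E_P[b_σ] = E_{P_𝚫}[b_σ] for every subset σ with |σ| ≥ 2. -/

import Mathlib

open Finset

/-- The set `𝒞_{≤n}` of simplicial complexes on at most `n` labeled vertices: downward-closed
families of nonempty subsets of `{1,…,n}` (possibly missing some vertices, possibly empty). -/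
def SComplex (n : ℕ) :=
  {C : Finset (Finset (Fin n)) // ∅ ∉ C ∧ ∀ σ ∈ C, ∀ τ, τ ⊆ σ → τ ≠ ∅ → τ ∈ C}

instance (n : ℕ) : Fintype (SComplex n) := by unfold SComplex; infer_instance

instance (n : ℕ) : DecidableEq (SComplex n) := by unfold SComplex; infer_instance

/-- `a_σ(C)`: indicator that `σ` is a simplex of `C`. -/
def aInd {n : ℕ} (C : SComplex n) (σ : Finset (Fin n)) : ℕ :=
  if σ ∈ C.1 then 1 else 0

/-- `b_σ(C)`: indicator that the entire boundary of `σ` (all facets `σ.erase i`) is in `C`;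
by convention `b_σ = 1` for singletons (whose unique facet is the empty set). -/
def bInd {n : ℕ} (C : SComplex n) (σ : Finset (Fin n)) : ℕ :=
  if ∀ i ∈ σ, σ.erase i = ∅ ∨ σ.erase i ∈ C.1 then 1 else 0

/-- The distribution of the general independent-simplex model `𝚫(n; 𝐩₁,…,𝐩ₙ)`:
`P_𝚫(C) = ∏_σ p_σ^{a_σ(C)} (1-p_σ)^{b_σ(C)-a_σ(C)}` over all nonempty `σ ⊆ {1,…,n}`. -/
def PDelta (n : ℕ) (p : Finset (Fin n) → ℝ) (C : SComplex n) : ℝ :=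
  ∏ σ ∈ (univ : Finset (Finset (Fin n))).filter (fun σ => σ ≠ ∅),
    p σ ^ aInd C σ * (1 - p σ) ^ (bInd C σ - aInd C σ)

/-!
Flip an independent `p σ`-coin for every nonempty `σ` and let `C` be the largest complex
all of whose simplices came up heads. A given complex `C` arises exactly when the heads among
its candidates (the `σ` with `b_σ(C) = 1`) are precisely the simplices of `C`, an event of
probability `P_𝚫(C)`; hence `P_𝚫` is a probability distribution. Since `log P_𝚫` is a linear
combination of the observables `a_σ` and `b_σ` (and `b_σ ≡ 1` on singletons), the constraints
pin down the cross entropy `∑ P log P_𝚫`, and Gibbs' inequality, in the form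
`q · klFun (P / q) ≥ 0` with equality only at `P = q`, gives the maximum and its uniqueness.
-/

section CoinWeight

variable {α : Type*} [DecidableEq α] (p : α → ℝ)

def coinWeight (E S : Finset α) : ℝ :=
  (∏ a ∈ S, p a) * ∏ a ∈ E \ S, (1 - p a)

theorem sum_coinWeight_powerset (E : Finset α) : ∑ S ∈ E.powerset, coinWeight p E S = 1 := by
  simpa [coinWeight] using (prod_add p (fun a => 1 - p a) E).symm

theorem coinWeight_eq_prod_ite {E S : Finset α} (hSE : S ⊆ E) :
    coinWeight p E S = ∏ a ∈ E, if a ∈ S then p a else 1 - p a := by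
  rw [prod_ite, filter_mem_eq_inter, inter_eq_right.2 hSE, filter_not, filter_mem_eq_inter,
    inter_eq_right.2 hSE, coinWeight]

theorem coinWeight_union {A B E T : Finset α} (hAB : A ⊆ B) (hBE : B ⊆ E) (hT : T ⊆ E \ B) :
    coinWeight p E (A ∪ T) = coinWeight p B A * coinWeight p (E \ B) T := by
  rw [coinWeight_eq_prod_ite p (union_subset (hAB.trans hBE) (hT.trans sdiff_subset)),
    coinWeight_eq_prod_ite p hAB, coinWeight_eq_prod_ite p hT, ← prod_sdiff hBE, mul_comm]
  congr 1 <;> refine prod_congr rfl fun a ha => ?_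
  · have : a ∉ T := fun h => (mem_sdiff.1 (hT h)).2 ha
    simp [this]
  · have : a ∉ A := fun h => (mem_sdiff.1 ha).2 (hAB h)
    simp [this]

theorem sum_coinWeight_inter_eq {A B E : Finset α} (hAB : A ⊆ B) (hBE : B ⊆ E) :
    ∑ S ∈ E.powerset with S ∩ B = A, coinWeight p E S = coinWeight p B A := by
  have hsplit : ∀ S ∈ {S ∈ E.powerset | S ∩ B = A}, A ∪ (S \ B) = S := by
    intro S hS
    rw [← (mem_filter.1 hS).2, union_comm, sdiff_union_inter]
  have hT : ∀ T ∈ (E \ B).powerset, (A ∪ T) \ B = T ∧ (A ∪ T) ∩ B = A := by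
    intro T hT
    have hTB : Disjoint T B := disjoint_of_subset_left (mem_powerset.1 hT) sdiff_disjoint
    rw [union_sdiff_distrib, sdiff_eq_empty_iff_subset.2 hAB, sdiff_eq_self_of_disjoint hTB,
      union_inter_distrib_right, inter_eq_left.2 hAB, disjoint_iff_inter_eq_empty.1 hTB]
    simp
  calc ∑ S ∈ E.powerset with S ∩ B = A, coinWeight p E S
      = ∑ T ∈ (E \ B).powerset, coinWeight p E (A ∪ T) := by
        refine sum_nbij' (· \ B) (A ∪ ·) (fun S hS => ?_) (fun T hT' => ?_) hsplit
          (fun T hT' => (hT T hT').1) (fun S hS => by rw [hsplit S hS])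
        · exact mem_powerset.2 (sdiff_subset_sdiff (mem_powerset.1 (mem_filter.1 hS).1) subset_rfl)
        · refine mem_filter.2 ⟨mem_powerset.2 (union_subset (hAB.trans hBE) ?_), (hT T hT').2⟩
          exact (mem_powerset.1 hT').trans sdiff_subset
    _ = ∑ T ∈ (E \ B).powerset, coinWeight p B A * coinWeight p (E \ B) T :=
        sum_congr rfl fun T hT' => coinWeight_union p hAB hBE (mem_powerset.1 hT')
    _ = coinWeight p B A := by rw [← mul_sum, sum_coinWeight_powerset, mul_one]

end CoinWeight

def nonemptyFinsets (n : ℕ) : Finset (Finset (Fin n)) :=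
  (univ : Finset (Finset (Fin n))).filter (fun σ => σ ≠ ∅)

namespace SComplex

variable {n : ℕ}

theorem bInd_eq_one_of_mem (C : SComplex n) {σ : Finset (Fin n)} (hσ : σ ∈ C.1) :
    bInd C σ = 1 :=
  if_pos fun i _ => or_iff_not_imp_left.2 fun hne => C.2.2 σ hσ _ (erase_subset i σ) hne

theorem bInd_eq_one_of_card_eq_one (C : SComplex n) {σ : Finset (Fin n)} (hσ : σ.card = 1) :
    bInd C σ = 1 := by
  obtain ⟨a, rfl⟩ := card_eq_one.1 hσ
  simp [bInd]

theorem aInd_le_bInd (C : SComplex n) (σ : Finset (Fin n)) : aInd C σ ≤ bInd C σ := by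
  by_cases hσ : σ ∈ C.1
  · simp [aInd, hσ, bInd_eq_one_of_mem C hσ]
  · simp [aInd, hσ]

def candidates (C : SComplex n) : Finset (Finset (Fin n)) :=
  {σ ∈ nonemptyFinsets n | bInd C σ = 1}

theorem candidates_subset (C : SComplex n) : C.candidates ⊆ nonemptyFinsets n :=
  filter_subset _ _

theorem subset_candidates (C : SComplex n) : C.1 ⊆ C.candidates := fun σ hσ =>
  mem_filter.2 ⟨mem_filter.2 ⟨mem_univ σ, fun h => C.2.1 (h ▸ hσ)⟩, C.bInd_eq_one_of_mem hσ⟩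

theorem mem_of_ssubset_of_mem_candidates (C : SComplex n) {σ τ : Finset (Fin n)}
    (hσ : σ ∈ C.candidates) (hτσ : τ ⊂ σ) (hτ : τ ≠ ∅) : τ ∈ C.1 := by
  obtain ⟨i, hiσ, hiτ⟩ := exists_of_ssubset hτσ
  have hτi : τ ⊆ σ.erase i := subset_erase.2 ⟨hτσ.subset, hiτ⟩
  have hbd : σ.erase i = ∅ ∨ σ.erase i ∈ C.1 := by
    have hb := (mem_filter.1 hσ).2
    unfold bInd at hb
    split_ifs at hb with h
    exact h i hiσ
  rcases hbd with h | h
  · exact absurd (subset_empty.1 (h ▸ hτi)) hτ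
  · exact C.2.2 _ h τ hτi hτ

theorem PDelta_factor_eq_ite (C : SComplex n) (p : Finset (Fin n) → ℝ)
    {σ : Finset (Fin n)} (hσ : bInd C σ = 1) :
    p σ ^ aInd C σ * (1 - p σ) ^ (bInd C σ - aInd C σ) = if σ ∈ C.1 then p σ else 1 - p σ := by
  by_cases h : σ ∈ C.1 <;> simp [aInd, hσ, h]

theorem PDelta_eq_coinWeight (p : Finset (Fin n) → ℝ) (C : SComplex n) :
    PDelta n p C = coinWeight p C.candidates C.1 := by
  rw [coinWeight_eq_prod_ite p C.subset_candidates]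
  change ∏ σ ∈ nonemptyFinsets n, _ = _
  rw [← prod_subset C.candidates_subset fun σ hσ hσC => ?_]
  · exact prod_congr rfl fun σ hσ => C.PDelta_factor_eq_ite p (mem_filter.1 hσ).2
  · have hb : bInd C σ = 0 := by
      have : bInd C σ ≠ 1 := fun h => hσC (mem_filter.2 ⟨hσ, h⟩)
      unfold bInd at this ⊢
      split_ifs at this ⊢ <;> simp_all
    have ha : aInd C σ = 0 := Nat.le_zero.1 (hb ▸ C.aInd_le_bInd σ)
    simp [ha, hb]

def maxSubcomplex (S : Finset (Finset (Fin n))) : SComplex n where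
  val := {σ | σ ≠ ∅ ∧ ∀ τ ⊆ σ, τ ≠ ∅ → τ ∈ S}
  property := ⟨by simp, fun σ hσ τ hτσ hτ => by
    simp only [mem_filter, mem_univ, true_and] at hσ ⊢
    exact ⟨hτ, fun ρ hρτ => hσ.2 ρ (hρτ.trans hτσ)⟩⟩

theorem mem_maxSubcomplex {S : Finset (Finset (Fin n))} {σ : Finset (Fin n)} :
    σ ∈ (maxSubcomplex S).1 ↔ σ ≠ ∅ ∧ ∀ τ ⊆ σ, τ ≠ ∅ → τ ∈ S := by
  simp [maxSubcomplex]

theorem inter_candidates_maxSubcomplex (S : Finset (Finset (Fin n))) :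
    S ∩ (maxSubcomplex S).candidates = (maxSubcomplex S).1 := by
  refine Subset.antisymm (fun σ hσ => ?_) fun σ hσ =>
    mem_inter.2 ⟨(mem_maxSubcomplex.1 hσ).2 σ subset_rfl (mem_maxSubcomplex.1 hσ).1,
      subset_candidates _ hσ⟩
  obtain ⟨hσS, hσc⟩ := mem_inter.1 hσ
  refine mem_maxSubcomplex.2 ⟨(mem_filter.1 (candidates_subset _ hσc)).2, fun τ hτσ hτ => ?_⟩
  rcases hτσ.eq_or_ssubset with rfl | hτσ
  · exact hσS
  · exact (mem_maxSubcomplex.1 (mem_of_ssubset_of_mem_candidates _ hσc hτσ hτ)).2 τ subset_rfl hτ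

theorem maxSubcomplex_eq_of_inter_candidates {S : Finset (Finset (Fin n))} {C : SComplex n}
    (h : S ∩ C.candidates = C.1) : maxSubcomplex S = C := by
  have hCS : C.1 ⊆ S := h ▸ inter_subset_left
  refine Subtype.ext (Subset.antisymm (fun σ hσ => ?_) fun σ hσ =>
    mem_maxSubcomplex.2 ⟨fun h0 => C.2.1 (h0 ▸ hσ), fun τ hτσ hτ => hCS (C.2.2 σ hσ τ hτσ hτ)⟩)
  induction σ using Finset.strongInduction with
  | H σ ih =>
    have hfacets : ∀ i ∈ σ, σ.erase i = ∅ ∨ σ.erase i ∈ C.1 := fun i hi =>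
      or_iff_not_imp_left.2 fun hne =>
        ih _ (erase_ssubset hi) ((maxSubcomplex S).2.2 σ hσ _ (erase_subset i σ) hne)
    obtain ⟨hne, hfaces⟩ := mem_maxSubcomplex.1 hσ
    have hσc : σ ∈ C.candidates :=
      mem_filter.2 ⟨mem_filter.2 ⟨mem_univ σ, hne⟩, if_pos hfacets⟩
    exact h ▸ mem_inter.2 ⟨hfaces σ subset_rfl hne, hσc⟩

theorem maxSubcomplex_eq_iff {S : Finset (Finset (Fin n))} {C : SComplex n} :
    maxSubcomplex S = C ↔ S ∩ C.candidates = C.1 :=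
  ⟨by rintro rfl; exact inter_candidates_maxSubcomplex S, maxSubcomplex_eq_of_inter_candidates⟩

end SComplex

open SComplex in
theorem sum_PDelta (n : ℕ) (p : Finset (Fin n) → ℝ) : ∑ C : SComplex n, PDelta n p C = 1 := by
  calc ∑ C : SComplex n, PDelta n p C
      = ∑ C : SComplex n, ∑ S ∈ (nonemptyFinsets n).powerset with maxSubcomplex S = C,
          coinWeight p (nonemptyFinsets n) S := by
        refine sum_congr rfl fun C _ => ?_
        simp_rw [maxSubcomplex_eq_iff]
        rw [sum_coinWeight_inter_eq p C.subset_candidates C.candidates_subset,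
          PDelta_eq_coinWeight]
    _ = ∑ S ∈ (nonemptyFinsets n).powerset, coinWeight p (nonemptyFinsets n) S :=
        sum_fiberwise_of_maps_to (fun _ _ => mem_univ _) _
    _ = 1 := sum_coinWeight_powerset p _

open Real InformationTheory

theorem mul_klFun_div (P : ℝ) {q : ℝ} (hq : q ≠ 0) :
    q * klFun (P / q) = P * log P - P * log q + q - P := by
  rcases eq_or_ne P 0 with rfl | hP
  · simp [klFun]
  · rw [klFun, log_div hP hq]
    field_simp

theorem entropy_le_of_cross_entropy_eq {ι : Type*} [Fintype ι] {P q : ι → ℝ}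
    (hq : ∀ i, 0 < q i) (hP : ∀ i, 0 ≤ P i) (hsum : ∑ i, P i = ∑ i, q i)
    (hcross : ∑ i, P i * log (q i) = ∑ i, q i * log (q i)) :
    -∑ i, P i * log (P i) ≤ -∑ i, q i * log (q i) ∧
      (-∑ i, P i * log (P i) = -∑ i, q i * log (q i) ↔ P = q) := by
  have hkl : ∑ i, q i * klFun (P i / q i) = ∑ i, P i * log (P i) - ∑ i, q i * log (q i) := by
    simp only [fun i => mul_klFun_div (P i) (hq i).ne', sum_add_distrib, sum_sub_distrib]
    rw [hsum, hcross]
    ring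
  have hterm : ∀ i ∈ univ, 0 ≤ q i * klFun (P i / q i) := fun i _ =>
    mul_nonneg (hq i).le (klFun_nonneg (div_nonneg (hP i) (hq i).le))
  refine ⟨by linarith [sum_nonneg hterm], ?_⟩
  rw [neg_inj, ← sub_eq_zero, ← hkl, sum_eq_zero_iff_of_nonneg hterm, funext_iff]
  refine forall_congr' fun i => ?_
  rw [mul_eq_zero, or_iff_right (hq i).ne', klFun_eq_zero_iff (div_nonneg (hP i) (hq i).le),
    div_eq_one_iff_eq (hq i).ne']
  simp

theorem sum_mul_sum_eq_of_moments {ι κ : Type*} [Fintype ι] (s : Finset κ) (θ : κ → ℝ)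
    (f : κ → ι → ℝ) {P Q : ι → ℝ} (h : ∀ k ∈ s, ∑ i, f k i * P i = ∑ i, f k i * Q i) :
    ∑ i, P i * ∑ k ∈ s, θ k * f k i = ∑ i, Q i * ∑ k ∈ s, θ k * f k i := by
  simp_rw [mul_sum]
  rw [sum_comm, sum_comm (s := univ)]
  refine sum_congr rfl fun k hk => ?_
  calc ∑ i, P i * (θ k * f k i) = θ k * ∑ i, f k i * P i := by
        rw [mul_sum]; exact sum_congr rfl fun i _ => by ring
    _ = ∑ i, Q i * (θ k * f k i) := by
        rw [h k hk, mul_sum]; exact sum_congr rfl fun i _ => by ring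

section PDelta

variable {n : ℕ} {p : Finset (Fin n) → ℝ}

theorem PDelta_pos (hp : ∀ σ, p σ ∈ Set.Ioo (0 : ℝ) 1) (C : SComplex n) : 0 < PDelta n p C :=
  prod_pos fun σ _ => mul_pos (pow_pos (hp σ).1 _) (pow_pos (sub_pos.2 (hp σ).2) _)

theorem log_PDelta (hp : ∀ σ, p σ ∈ Set.Ioo (0 : ℝ) 1) (C : SComplex n) :
    log (PDelta n p C) =
      ∑ σ ∈ nonemptyFinsets n, (log (p σ) - log (1 - p σ)) * aInd C σ +
        ∑ σ ∈ nonemptyFinsets n, log (1 - p σ) * bInd C σ := by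
  have hp0 : ∀ σ, p σ ≠ 0 := fun σ => (hp σ).1.ne'
  have hq0 : ∀ σ, 1 - p σ ≠ 0 := fun σ => (sub_pos.2 (hp σ).2).ne'
  rw [PDelta, log_prod fun σ _ => mul_ne_zero (pow_ne_zero _ (hp0 σ)) (pow_ne_zero _ (hq0 σ)),
    ← sum_add_distrib]
  refine sum_congr rfl fun σ _ => ?_
  rw [log_mul (pow_ne_zero _ (hp0 σ)) (pow_ne_zero _ (hq0 σ)), log_pow, log_pow,
    Nat.cast_sub (SComplex.aInd_le_bInd C σ)]
  ring

theorem sum_mul_log_PDelta_eq (hp : ∀ σ, p σ ∈ Set.Ioo (0 : ℝ) 1) {P : SComplex n → ℝ}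
    (hPsum : ∑ C, P C = 1)
    (ha : ∀ σ : Finset (Fin n), σ.Nonempty →
      ∑ C, (aInd C σ : ℝ) * P C = ∑ C, (aInd C σ : ℝ) * PDelta n p C)
    (hb : ∀ σ : Finset (Fin n), 2 ≤ σ.card →
      ∑ C, (bInd C σ : ℝ) * P C = ∑ C, (bInd C σ : ℝ) * PDelta n p C) :
    ∑ C, P C * log (PDelta n p C) = ∑ C, PDelta n p C * log (PDelta n p C) := by
  have hne : ∀ σ ∈ nonemptyFinsets n, σ.Nonempty := fun σ hσ =>
    nonempty_iff_ne_empty.2 (mem_filter.1 hσ).2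
  simp only [log_PDelta hp, mul_add, sum_add_distrib]
  congr 1
  · exact sum_mul_sum_eq_of_moments _ _ (fun σ C => (aInd C σ : ℝ)) fun σ hσ => ha σ (hne σ hσ)
  · refine sum_mul_sum_eq_of_moments _ _ (fun σ C => (bInd C σ : ℝ)) fun σ hσ => ?_
    rcases le_or_gt 2 σ.card with h2 | h1
    · exact hb σ h2
    · have hb1 : ∀ C : SComplex n, bInd C σ = 1 := fun C =>
        C.bInd_eq_one_of_card_eq_one (by have := (hne σ hσ).card_pos; omega)
      simp only [hb1, Nat.cast_one, one_mul, hPsum, sum_PDelta]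

end PDelta

/-- Theorem 3: `P_𝚫`, with all `p_σ ∈ (0,1)`, is a probability distribution on `𝒞_{≤n}` and
is the unique entropy maximizer among all probability distributions `P` on `𝒞_{≤n}` subject
to the constraints `E_P[a_σ] = E_{P_𝚫}[a_σ]` for every nonempty `σ` and
`E_P[b_σ] = E_{P_𝚫}[b_σ]` for every `σ` with `|σ| ≥ 2`. -/
theorem gen_delta_is_unique_maximum_entropy
    (n : ℕ) (p : Finset (Fin n) → ℝ) (hp : ∀ σ, p σ ∈ Set.Ioo (0 : ℝ) 1) :
    (∀ C, 0 ≤ PDelta n p C) ∧ (∑ C : SComplex n, PDelta n p C = 1) ∧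
    ∀ P : SComplex n → ℝ, (∀ C, 0 ≤ P C) → (∑ C, P C = 1) →
      (∀ σ : Finset (Fin n), σ.Nonempty →
        ∑ C : SComplex n, (aInd C σ : ℝ) * P C =
          ∑ C : SComplex n, (aInd C σ : ℝ) * PDelta n p C) →
      (∀ σ : Finset (Fin n), 2 ≤ σ.card →
        ∑ C : SComplex n, (bInd C σ : ℝ) * P C =
          ∑ C : SComplex n, (bInd C σ : ℝ) * PDelta n p C) →
      (-∑ C, P C * Real.log (P C)) ≤
          (-∑ C, PDelta n p C * Real.log (PDelta n p C)) ∧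
      ((-∑ C, P C * Real.log (P C)) =
          (-∑ C, PDelta n p C * Real.log (PDelta n p C)) ↔ P = PDelta n p) := by
  refine ⟨fun C => (PDelta_pos hp C).le, sum_PDelta n p, fun P hP hPsum ha hb => ?_⟩
  exact entropy_le_of_cross_entropy_eq (PDelta_pos hp) hP (by rw [hPsum, sum_PDelta])
    (sum_mul_log_PDelta_eq hp hPsum ha hb)
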